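/- arXiv:1604.06600 — 2 statements merged into one kernel-verified Lean document; each statement's English description precedes it below -/
import Mathlib

section
/- A local rule f : {0,1}^3 → {0,1} yields a number-conserving uniform cyclic CA for every length n ≥ 3 if and only if f(a,b,c) = b + g(b,c) - g(a,b) for some function g : {0,1}^2 → Z (treating values as integers). -/
set_option maxRecDepth 100000
set_option synthInstance.maxSize 1000
set_option synthInstance.maxHeartbeats 1000000
set_option maxHeartbeats 4000000

/-- Global map of a non-uniform cyclic CA of length `n`:
cell `i` updates via its local rule applied to `(x (i-1), x i, x (i+1))`, indices mod `n`. -/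
def caStep (n : ℕ) [NeZero n] (f : Fin n → Bool → Bool → Bool → Bool)
    (x : Fin n → Bool) : Fin n → Bool :=
  fun i => f i (x (i - 1)) (x i) (x (i + 1))

/-- Number of cells in state `true` (i.e. 1). -/
def onesCount (n : ℕ) (x : Fin n → Bool) : ℕ :=
  (Finset.univ.filter fun i => x i = true).card

/-- The CA conserves the number of 1s in every configuration. -/
def numberConserving (n : ℕ) [NeZero n] (f : Fin n → Bool → Bool → Bool → Bool) : Prop :=
  ∀ x : Fin n → Bool, onesCount n (caStep n f x) = onesCount n x

/-- The elementary CA rule with Wolfram number `R`. -/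
def wolfram (R : ℕ) (a b c : Bool) : Bool :=
  R.testBit (4 * a.toNat + 2 * b.toNat + c.toNat)

/-- Candidate potential function. -/
def GG (f : Bool → Bool → Bool → Bool) (b c : Bool) : ℤ :=
  ((f false b c).toNat : ℤ) - b.toNat + (f false false b).toNat

lemma key : ∀ f : Bool → Bool → Bool → Bool,
    (@numberConserving 3 ⟨by norm_num⟩ (fun _ => f)) →
    (@numberConserving 4 ⟨by norm_num⟩ (fun _ => f)) →
    (@numberConserving 5 ⟨by norm_num⟩ (fun _ => f)) →
    ∀ a b c : Bool, ((f a b c).toNat : ℤ) = (b.toNat : ℤ) + GG f b c - GG f a b := by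
  simp only [numberConserving, onesCount, caStep, GG]
  decide

lemma onesCount_eq_sum (n : ℕ) (x : Fin n → Bool) :
    onesCount n x = ∑ i, (x i).toNat := by
  unfold onesCount
  rw [Finset.card_filter]
  refine Finset.sum_congr rfl fun i _ => ?_
  cases x i <;> simp

lemma shift_sum (n : ℕ) [NeZero n] (x : Fin n → Bool) (g : Bool → Bool → ℤ) :
    ∑ i : Fin n, g (x (i - 1)) (x i) = ∑ i : Fin n, g (x i) (x (i + 1)) := by
  refine Fintype.sum_equiv (Equiv.subRight (1 : Fin n)) _ _ fun i => ?_
  simp [Equiv.subRight_apply, sub_add_cancel]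

lemma conserving_of_form (n : ℕ) [NeZero n] (f : Bool → Bool → Bool → Bool)
    (g : Bool → Bool → ℤ)
    (hf : ∀ a b c, ((f a b c).toNat : ℤ) = (b.toNat : ℤ) + g b c - g a b) :
    numberConserving n (fun _ => f) := by
  intro x
  have hz : (onesCount n (caStep n (fun _ => f) x) : ℤ) = (onesCount n x : ℤ) := by
    rw [onesCount_eq_sum, onesCount_eq_sum]
    push_cast
    calc ∑ i : Fin n, ((f (x (i - 1)) (x i) (x (i + 1))).toNat : ℤ)
        = ∑ i : Fin n, (((x i).toNat : ℤ) + g (x i) (x (i + 1)) - g (x (i - 1)) (x i)) := by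
          exact Finset.sum_congr rfl fun i _ => hf _ _ _
      _ = (∑ i : Fin n, ((x i).toNat : ℤ)) + (∑ i : Fin n, g (x i) (x (i + 1)))
            - ∑ i : Fin n, g (x (i - 1)) (x i) := by
          rw [Finset.sum_sub_distrib, Finset.sum_add_distrib]
      _ = ∑ i : Fin n, ((x i).toNat : ℤ) := by rw [shift_sum]; ring
  exact_mod_cast hz

theorem stmt10 (f : Bool → Bool → Bool → Bool) :
    (∀ n : ℕ, 3 ≤ n → ∀ inst : NeZero n, @numberConserving n inst (fun _ => f)) ↔
    ∃ g : Bool → Bool → ℤ, ∀ a b c : Bool,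
      ((f a b c).toNat : ℤ) = (b.toNat : ℤ) + g b c - g a b := by
  constructor
  · intro h
    exact ⟨GG f, key f (h 3 (by norm_num) _) (h 4 (by norm_num) _) (h 5 (by norm_num) _)⟩
  · rintro ⟨g, hg⟩ n _ inst
    exact conserving_of_form n f g hg
end

section
/- In a number-conserving non-uniform cyclic CA of length n, for each cell i: if f_i(1,0,0) ≠ f_i(0,0,0) then f_i(1,0,1) = 1 and f_i(0,0,1) = 0. -/
/-!
Put 1s at `i - 1` and `i + 1`. Since `n ≥ 5`, every cell other than `i` sees at most one of
them, so away from `i` the images of this configuration and of the zero configuration add up,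
cell by cell, to the images of the two single-1 configurations. Conservation (`2 + 0 = 1 + 1`)
then forces the same at cell `i`: `f i 1 0 1 + f i 0 0 0 = f i 1 0 0 + f i 0 0 1`. With
`f i 0 0 0 = 0` and `f i 1 0 0 = 1` this leaves only `f i 1 0 1 = 1`, `f i 0 0 1 = 0`.
-/

open Finset Fin.CommRing

lemma Fintype.apply_eq_of_sum_eq_of_forall_ne {ι M : Type*} [Fintype ι] [DecidableEq ι]
    [AddCancelCommMonoid M] {g h : ι → M} (i : ι) (hne : ∀ k, k ≠ i → g k = h k)
    (hsum : ∑ k, g k = ∑ k, h k) : g i = h i := by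
  rw [← add_sum_erase _ _ (mem_univ i), ← add_sum_erase _ _ (mem_univ i),
    Finset.sum_congr rfl fun k hk => hne k (ne_of_mem_erase hk)] at hsum
  exact add_right_cancel hsum

lemma Fin.natCast_ne_zero_of_lt {n a : ℕ} [NeZero n] (ha : 0 < a) (han : a < n) :
    (a : Fin n) ≠ 0 := by
  rw [Ne, Fin.natCast_eq_zero]
  exact fun hdvd => absurd (Nat.le_of_dvd ha hdvd) (by omega)

lemma Fin.window_avoids_sub_one_or_add_one {n : ℕ} [NeZero n] (hn : 5 ≤ n) {i k : Fin n}
    (hk : k ≠ i) :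
    (k - 1 ≠ i - 1 ∧ k ≠ i - 1 ∧ k + 1 ≠ i - 1) ∨
      (k - 1 ≠ i + 1 ∧ k ≠ i + 1 ∧ k + 1 ≠ i + 1) := by
  have h3 : (3 : Fin n) ≠ 0 := by
    exact_mod_cast Fin.natCast_ne_zero_of_lt (a := 3) (by norm_num) (by omega)
  have h4 : (4 : Fin n) ≠ 0 := by
    exact_mod_cast Fin.natCast_ne_zero_of_lt (a := 4) (by norm_num) (by omega)
  grind

lemma onesCount_eq_sum_toNat (n : ℕ) (x : Fin n → Bool) :
    onesCount n x = ∑ k, (x k).toNat := by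
  rw [onesCount, card_filter]
  congr! with k
  cases x k <;> rfl

lemma onesCount_indicator (n : ℕ) (a : Fin n) : onesCount n (fun k => decide (k = a)) = 1 := by
  simp [onesCount, filter_eq']

lemma onesCount_indicator_pair (n : ℕ) {a b : Fin n} (hab : a ≠ b) :
    onesCount n (fun k => decide (k = a) || decide (k = b)) = 2 := by
  simp [onesCount, filter_or, filter_eq', hab]

lemma onesCount_false (n : ℕ) : onesCount n (fun _ => false) = 0 := by
  simp [onesCount]

lemma toNat_caStep_or_add {n : ℕ} [NeZero n] (f : Fin n → Bool → Bool → Bool → Bool)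
    (u v : Fin n → Bool) {k : Fin n}
    (hv : v (k - 1) = false ∧ v k = false ∧ v (k + 1) = false) :
    (caStep n f (fun j => u j || v j) k).toNat + (caStep n f (fun _ => false) k).toNat =
      (caStep n f u k).toNat + (caStep n f v k).toNat := by
  obtain ⟨h₁, h₂, h₃⟩ := hv
  simp [caStep, h₁, h₂, h₃]

namespace numberConserving
variable {n : ℕ} [NeZero n] {f : Fin n → Bool → Bool → Bool → Bool}

lemma sum_toNat_caStep (h : numberConserving n f) (x : Fin n → Bool) :
    ∑ k, (caStep n f x k).toNat = onesCount n x := by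
  rw [← onesCount_eq_sum_toNat, h x]

lemma apply_false_false_false (h : numberConserving n f) (i : Fin n) :
    f i false false false = false := by
  have hzero := h.sum_toNat_caStep fun _ => false
  rw [onesCount_false, sum_eq_zero_iff] at hzero
  simpa [caStep] using hzero i (mem_univ i)

lemma toNat_apply_true_false_true_add (h : numberConserving n f) (hn : 5 ≤ n) (i : Fin n) :
    (f i true false true).toNat + (f i false false false).toNat =
      (f i true false false).toNat + (f i false false true).toNat := by
  set y : Fin n → Bool := fun k => decide (k = i - 1)
  set z : Fin n → Bool := fun k => decide (k = i + 1)
  have h1 : (1 : Fin n) ≠ 0 := by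
    exact_mod_cast Fin.natCast_ne_zero_of_lt (a := 1) (by norm_num) (by omega)
  have h2 : (2 : Fin n) ≠ 0 := by
    exact_mod_cast Fin.natCast_ne_zero_of_lt (a := 2) (by norm_num) (by omega)
  have hyz : i - 1 ≠ i + 1 := fun e => h2 (by linear_combination -e)
  have hsum : ∑ k, ((caStep n f (fun j => y j || z j) k).toNat +
      (caStep n f (fun _ => false) k).toNat) =
      ∑ k, ((caStep n f y k).toNat + (caStep n f z k).toNat) := by
    simp only [sum_add_distrib, h.sum_toNat_caStep, y, z, onesCount_indicator,
      onesCount_indicator_pair n hyz, onesCount_false]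
  have hi := Fintype.apply_eq_of_sum_eq_of_forall_ne i (fun k hk => ?_) hsum
  · have hi₁ : i ≠ i - 1 := fun e => h1 (by linear_combination e)
    have hi₂ : i ≠ i + 1 := fun e => h1 (by linear_combination -e)
    simpa [caStep, y, z, hyz, hyz.symm, hi₁, hi₂] using hi
  · rcases Fin.window_avoids_sub_one_or_add_one hn hk with hy | hz
    · rw [add_comm (caStep n f y k).toNat, funext fun j => Bool.or_comm (y j) (z j)]
      exact toNat_caStep_or_add f z y (by simpa [y] using hy)
    · exact toNat_caStep_or_add f y z (by simpa [z] using hz)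

end numberConserving

theorem stmt13 (n : ℕ) (hn : 5 ≤ n) [NeZero n] (f : Fin n → Bool → Bool → Bool → Bool)
    (h : numberConserving n f) :
    ∀ i : Fin n, f i true false false ≠ f i false false false →
      f i true false true = true ∧ f i false false true = false := by
  intro i hi
  have h000 := h.apply_false_false_false i
  have h100 : f i true false false = true := by simpa [h000] using hi
  have hadd := h.toNat_apply_true_false_true_add hn i
  rw [h000, h100] at hadd
  revert hadd
  cases f i true false true <;> cases f i false false true <;> simp
end
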